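/- For the second-order system obtained by differentiating a conservative Hamiltonian system with one degree of freedom, the deviation curvature matrix is P_H(x,y) = (1/2)·M_H(x,y) + (1/4)·J_H(x)², where M_H(x,y) is the 2×2 matrix whose first row is the transpose of (Hess H₂)(x)·y and whose second row is the transpose of (−Hess H₁)(x)·y, and J_H(x) is the 2×2 matrix ((H₂₁, H₂₂), (−H₁₁, −H₁₂)) evaluated at x. (Proposition 5.1.) -/

import Mathlib

/-!
The spray of the differentiated system `ẋ = F(x)`, `F = (H₂, −H₁)`, is linear in `y` with
coefficient matrix `−½ J`, `J = DF`. Hence `−2 ∂ⱼGⁱ = Σₗ yˡ ∂ⱼ∂ₗFⁱ` and `yˡ ∂ₗNⁱⱼ = −½ yˡ ∂ₗ∂ⱼFⁱ`;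
by the symmetry of second derivatives the two combine to `½ Σₗ yˡ ∂ₗ∂ⱼFⁱ = ½ Mⁱⱼ`, while
`Σₗ Nⁱₗ Nˡⱼ = ¼ (J²)ⁱⱼ`. Only `F ∈ C²` enters, so the same formula holds for the
differentiated system of any `C²` vector field `F`.
-/

open Matrix

/-- Partial derivative of a scalar function on `ℝ²` in the `i`-th coordinate direction. -/
noncomputable def pd (i : Fin 2) (φ : (Fin 2 → ℝ) → ℝ) (x : Fin 2 → ℝ) : ℝ :=
  fderiv ℝ φ x (Pi.single i 1)

lemma contDiff_pd {n : WithTop ℕ∞} {φ : (Fin 2 → ℝ) → ℝ} (hφ : ContDiff ℝ (n + 1) φ)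
    (i : Fin 2) : ContDiff ℝ n (pd i φ) :=
  (hφ.fderiv_right le_rfl).clm_apply contDiff_const

lemma differentiable_pd {φ : (Fin 2 → ℝ) → ℝ} (hφ : ContDiff ℝ 2 φ) (i : Fin 2) :
    Differentiable ℝ (pd i φ) :=
  (contDiff_pd (n := 1) hφ i).differentiable one_ne_zero

lemma pd_pd_comm {φ : (Fin 2 → ℝ) → ℝ} (hφ : ContDiff ℝ 2 φ) (i j : Fin 2) (x : Fin 2 → ℝ) :
    pd i (pd j φ) x = pd j (pd i φ) x := by
  have hd : DifferentiableAt ℝ (fderiv ℝ φ) x :=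
    ((hφ.fderiv_right (m := 1) le_rfl).differentiable one_ne_zero).differentiableAt
  have hsymm : IsSymmSndFDerivAt ℝ φ x :=
    hφ.contDiffAt.isSymmSndFDerivAt (by simp [minSmoothness_of_isRCLikeNormedField])
  unfold pd
  rw [fderiv_clm_apply hd (differentiableAt_const _),
    fderiv_clm_apply hd (differentiableAt_const _)]
  simpa using hsymm (Pi.single i 1) (Pi.single j 1)

lemma pd_const_mul (c : ℝ) (φ : (Fin 2 → ℝ) → ℝ) (i : Fin 2) (x : Fin 2 → ℝ) :
    pd i (fun x' => c * φ x') x = c * pd i φ x := by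
  change fderiv ℝ (c • φ) x _ = _
  rw [fderiv_const_smul_field]
  rfl

lemma pd_neg (φ : (Fin 2 → ℝ) → ℝ) (i : Fin 2) :
    pd i (fun x => -φ x) = fun x => -pd i φ x := by
  funext x
  simp [pd, fderiv_fun_neg]

lemma pd_sum_mul_const {f : Fin 2 → (Fin 2 → ℝ) → ℝ} {x : Fin 2 → ℝ}
    (hf : ∀ l, DifferentiableAt ℝ (f l) x) (c : Fin 2 → ℝ) (i : Fin 2) :
    pd i (fun x' => ∑ l, f l x' * c l) x = ∑ l, pd i (f l) x * c l := by
  unfold pd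
  rw [fderiv_fun_sum fun l _ => (hf l).mul_const (c l)]
  simp [fderiv_mul_const (hf _), mul_comm]

theorem deviation_curvature_of_differentiated_system
    (F : Fin 2 → (Fin 2 → ℝ) → ℝ) (hF : ∀ i, ContDiff ℝ 2 (F i))
    (J : (Fin 2 → ℝ) → Matrix (Fin 2) (Fin 2) ℝ) (hJ : ∀ x i j, J x i j = pd j (F i) x)
    (G : (Fin 2 → ℝ) → (Fin 2 → ℝ) → Fin 2 → ℝ)
    (hG : ∀ x y i, G x y i = -(1/2) * ∑ j, J x i j * y j)
    (N : (Fin 2 → ℝ) → Matrix (Fin 2) (Fin 2) ℝ)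
    (hN : ∀ x i j, N x i j = -(1/2) * J x i j)
    (P : (Fin 2 → ℝ) → (Fin 2 → ℝ) → Matrix (Fin 2) (Fin 2) ℝ)
    (hP : ∀ x y i j, P x y i j =
      -2 * pd j (fun x' => G x' y i) x
      + ∑ l, y l * pd l (fun x' => N x' i j) x
      + ∑ l, N x i l * N x l j)
    (x y : Fin 2 → ℝ) (i j : Fin 2) :
    P x y i j = (1/2) * ∑ l, pd l (pd j (F i)) x * y l + (1/4) * (J x * J x) i j := by
  have hGx : pd j (fun x' => G x' y i) x = -(1/2) * ∑ l, pd l (pd j (F i)) x * y l := by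
    simp only [hG, hJ, pd_const_mul,
      pd_sum_mul_const fun l => (differentiable_pd (hF i) l).differentiableAt,
      pd_pd_comm (hF i) j]
  have hNx : ∀ l, pd l (fun x' => N x' i j) x = -(1/2) * pd l (pd j (F i)) x := by
    intro l
    simp only [hN, hJ, pd_const_mul]
  have hNN : ∑ l, N x i l * N x l j = (1/4) * (J x * J x) i j := by
    simp only [hN, mul_apply, Finset.mul_sum]
    exact Finset.sum_congr rfl fun l _ => by ring
  rw [hP, hGx, hNN]
  simp only [hNx, Fin.sum_univ_two]
  ring

/-- Proposition 5.1: for the second-order system obtained by differentiating the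
conservative Hamiltonian system `ẋ¹ = H₂`, `ẋ² = −H₁` (so `(G¹,G²)(x,y) = −(1/2)·J_H(x)·y`
with `J_H = ((H₂₁,H₂₂),(−H₁₁,−H₁₂))`, and nonlinear connection `Nⁱⱼ = −(1/2)(J_H)ⁱⱼ`),
the deviation curvature matrix `Pⁱⱼ = −2·∂Gⁱ/∂xʲ + Σₗ yˡ·∂Nⁱⱼ/∂xˡ + Σₗ Nⁱₗ·Nˡⱼ` satisfies
`P_H(x,y) = (1/2)·M_H(x,y) + (1/4)·J_H(x)²`, where the rows of `M_H(x,y)` are the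
transposes of `(Hess H₂)(x)·y` and `(−Hess H₁)(x)·y`. -/
theorem deviation_curvature_of_hamiltonian_system
    (H : (Fin 2 → ℝ) → ℝ) (hH : ContDiff ℝ 3 H)
    (H1 H2 : (Fin 2 → ℝ) → ℝ)
    (hH1 : ∀ x, H1 x = pd 0 H x) (hH2 : ∀ x, H2 x = pd 1 H x)
    (JH : (Fin 2 → ℝ) → Matrix (Fin 2) (Fin 2) ℝ)
    (hJH : ∀ x, JH x = !![pd 0 H2 x, pd 1 H2 x; -(pd 0 H1 x), -(pd 1 H1 x)])
    (G : (Fin 2 → ℝ) → (Fin 2 → ℝ) → Fin 2 → ℝ)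
    (hG : ∀ x y i, G x y i = -(1/2) * ∑ j, JH x i j * y j)
    (N : (Fin 2 → ℝ) → Matrix (Fin 2) (Fin 2) ℝ)
    (hN : ∀ x i j, N x i j = -(1/2) * JH x i j)
    (P : (Fin 2 → ℝ) → (Fin 2 → ℝ) → Matrix (Fin 2) (Fin 2) ℝ)
    (hP : ∀ x y i j, P x y i j =
      -2 * pd j (fun x' => G x' y i) x
      + ∑ l, y l * pd l (fun x' => N x' i j) x
      + ∑ l, N x i l * N x l j)
    (HessH1 HessH2 : (Fin 2 → ℝ) → Matrix (Fin 2) (Fin 2) ℝ)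
    (hHessH1 : ∀ x i j, HessH1 x i j = pd j (fun x' => pd i H1 x') x)
    (hHessH2 : ∀ x i j, HessH2 x i j = pd j (fun x' => pd i H2 x') x)
    (M : (Fin 2 → ℝ) → (Fin 2 → ℝ) → Matrix (Fin 2) (Fin 2) ℝ)
    (hM : ∀ x y, M x y = !![(HessH2 x *ᵥ y) 0, (HessH2 x *ᵥ y) 1;
                            ((-HessH1 x) *ᵥ y) 0, ((-HessH1 x) *ᵥ y) 1]) :
    ∀ x y, P x y = (1/2 : ℝ) • M x y + (1/4 : ℝ) • (JH x * JH x) := by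
  intro x y
  have hH1c : ContDiff ℝ 2 H1 := funext hH1 ▸ contDiff_pd hH 0
  have hH2c : ContDiff ℝ 2 H2 := funext hH2 ▸ contDiff_pd hH 1
  set F : Fin 2 → (Fin 2 → ℝ) → ℝ := ![H2, fun x => -H1 x]
  have hF : ∀ i, ContDiff ℝ 2 (F i) := by
    intro i
    fin_cases i
    exacts [hH2c, hH1c.neg]
  have hJF : ∀ x i j, JH x i j = pd j (F i) x := by
    intro x i j
    fin_cases i <;> fin_cases j <;> simp [hJH, F, pd_neg]
  ext i j
  rw [deviation_curvature_of_differentiated_system F hF JH hJF G hG N hN P hP]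
  fin_cases i <;> fin_cases j <;> simp [hM, hHessH1, hHessH2, F, pd_neg, mulVec, dotProduct]
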